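/- arXiv:0707.0300 — 3 statements merged into one kernel-verified Lean document; each statement's English description precedes it below -/
import Mathlib

section
/- Let K be a finite simplicial complex on a finite vertex set V and let R be a commutative ring. For each face σ of K let S_R(σ) = R[x_v : v ∈ σ] be the polynomial R-algebra on σ, and for faces σ ⊆ τ let p_{τσ} : S_R(τ) → S_R(σ) be the R-algebra homomorphism with p_{τσ}(x_v) = x_v for v ∈ σ and p_{τσ}(x_v) = 0 for v ∈ τ ∖ σ. Let q_σ : R[K] → S_R(σ) be the R-algebra homomorphism induced by x_v ↦ x_v for v ∈ σ and x_v ↦ 0 for v ∉ σ. Then the cone with vertex R[K] and legs q_σ is a limit cone for the functor from the opposite of the face poset of K to the category of commutative R-algebras that sends σ to S_R(σ) and an inclusion σ ⊆ τ to p_{τσ}; in particular the Stanley–Reisner ring R[K] is isomorphic to the limit of this diagram. -/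
/-!
Restricting a polynomial to a face `σ` keeps exactly its terms whose support lies in `σ`. As `K`
is closed under subsets, a polynomial lies in the Stanley–Reisner ideal iff none of its monomials
has a face as support, i.e. iff all its restrictions to faces vanish: the legs are jointly
injective. Conversely, a compatible family on the faces is the restriction of the polynomial whose
coefficient at a monomial with support a face `ζ` is read off from the member of the family at
`ζ` (finitely many faces make this a polynomial). So `R[K]` is the algebra of compatible families.
-/

open MvPolynomial

/-- The Stanley–Reisner ideal of a collection `K` of subsets of `V`:
the ideal generated by the square-free monomials `∏_{v ∈ ζ} X v` over all
non-faces `ζ ∉ K`. -/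
noncomputable def stanleyReisnerIdeal (R V : Type) [CommRing R] [DecidableEq V]
    (K : Set (Finset V)) : Ideal (MvPolynomial V R) :=
  Ideal.span { m | ∃ ζ : Finset V, ζ ∉ K ∧ m = ∏ v ∈ ζ, X v }

/-- The Stanley–Reisner ring `R[K]`. -/
abbrev stanleyReisnerRing (R V : Type) [CommRing R] [DecidableEq V]
    (K : Set (Finset V)) : Type :=
  MvPolynomial V R ⧸ stanleyReisnerIdeal R V K

/-- For faces `σ ⊆ τ`, the projection `S_R(τ) → S_R(σ)` sending `x_v ↦ x_v`
for `v ∈ σ` and `x_v ↦ 0` for `v ∈ τ \ σ`. -/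
noncomputable def faceProj (R V : Type) [CommRing R] [DecidableEq V]
    (σ τ : Finset V) :
    MvPolynomial { v // v ∈ τ } R →ₐ[R] MvPolynomial { v // v ∈ σ } R :=
  aeval (fun v : { v // v ∈ τ } =>
    if h : (v : V) ∈ σ then (X ⟨v, h⟩ : MvPolynomial { v // v ∈ σ } R) else 0)

theorem existsUnique_algHom_comp_eq_of_jointly_injective {R A B ι : Type*} {C : ι → Type*}
    [CommSemiring R] [Semiring A] [Algebra R A] [Semiring B] [Algebra R B]
    [∀ i, Semiring (C i)] [∀ i, Algebra R (C i)]
    (φ : ∀ i, A →ₐ[R] C i) (hφ : ∀ a a', (∀ i, φ i a = φ i a') → a = a')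
    (f : ∀ i, B →ₐ[R] C i) (hf : ∀ b, ∃ a, ∀ i, φ i a = f i b) :
    ∃! g : B →ₐ[R] A, ∀ i, (φ i).comp g = f i := by
  let Φ := AlgHom.pi φ
  have hΦ : Function.Injective Φ := fun a a' h => hφ a a' (congr_fun h)
  have hrange : ∀ b, AlgHom.pi f b ∈ Φ.range := fun b =>
    let ⟨a, ha⟩ := hf b
    ⟨a, funext ha⟩
  have hcomp : ∀ g : B →ₐ[R] A, (∀ i, (φ i).comp g = f i) ↔ Φ.comp g = AlgHom.pi f := by
    intro g
    rw [AlgHom.pi_comp]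
    exact ⟨fun h => congrArg AlgHom.pi (funext h),
      fun h i => AlgHom.ext fun b => congr_fun (DFunLike.congr_fun h b) i⟩
  simp_rw [hcomp]
  let e := AlgEquiv.ofInjective Φ hΦ
  have hg : Φ.comp (e.symm.toAlgHom.comp ((AlgHom.pi f).codRestrict _ hrange)) = AlgHom.pi f :=
    AlgHom.ext fun b => congrArg Subtype.val (e.apply_symm_apply _)
  exact ⟨_, hg, fun g hg' => AlgHom.ext fun b => hΦ (DFunLike.congr_fun (hg'.trans hg.symm) b)⟩

noncomputable def restrictFace (R : Type) {V : Type} [CommRing R] [DecidableEq V]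
    (σ : Finset V) : MvPolynomial V R →ₐ[R] MvPolynomial σ R :=
  aeval fun v => if h : v ∈ σ then X ⟨v, h⟩ else 0

section

variable {R V : Type} [CommRing R] [DecidableEq V]

theorem restrictFace_eq_killCompl (σ : Finset V) :
    restrictFace R σ = killCompl Subtype.val_injective := by
  refine algHom_ext fun v => ?_
  by_cases h : v ∈ σ
  · rw [restrictFace, killCompl, aeval_X, aeval_X, dif_pos h, dif_pos ⟨⟨v, h⟩, rfl⟩]
    exact congrArg X (Equiv.ofInjective_symm_apply Subtype.val_injective ⟨v, h⟩).symm
  · simp [restrictFace, killCompl, h]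

theorem coeff_restrictFace (σ : Finset V) (p : MvPolynomial V R) (c : σ →₀ ℕ) :
    coeff c (restrictFace R σ p) = coeff (c.mapDomain Subtype.val) p := by
  rw [restrictFace_eq_killCompl, coeff_killCompl]

theorem support_mapDomain_val_subset {σ : Finset V} (c : σ →₀ ℕ) :
    (c.mapDomain Subtype.val).support ⊆ σ := fun v hv => by
  obtain ⟨w, -, rfl⟩ := Finset.mem_image.1 (Finsupp.mapDomain_support hv)
  exact w.2

theorem restrictFace_rename_val (σ : Finset V) (p : MvPolynomial σ R) :
    restrictFace R σ (rename Subtype.val p) = p := by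
  rw [restrictFace_eq_killCompl, killCompl_rename_app]

theorem coeff_rename_restrictFace {σ : Finset V} {a : V →₀ ℕ} (ha : a.support ⊆ σ)
    (p : MvPolynomial V R) :
    coeff a (rename Subtype.val (restrictFace R σ p)) = coeff a p := by
  obtain ⟨c, rfl⟩ : ∃ c : σ →₀ ℕ, c.mapDomain Subtype.val = a :=
    ⟨_, Finsupp.mapDomain_comapDomain _ Subtype.val_injective a (by simpa using ha)⟩
  rw [coeff_rename_mapDomain _ Subtype.val_injective, coeff_restrictFace]

theorem faceProj_comp_restrictFace {σ τ : Finset V} (h : σ ⊆ τ) :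
    (faceProj R V σ τ).comp (restrictFace R τ) = restrictFace R σ := by
  refine algHom_ext fun v => ?_
  by_cases hσ : v ∈ σ
  · simp [restrictFace, faceProj, hσ, h hσ]
  · by_cases hτ : v ∈ τ <;> simp [restrictFace, faceProj, hσ, hτ]

theorem coeff_rename_faceProj {ζ σ : Finset V} (h : ζ ⊆ σ) {a : V →₀ ℕ} (ha : a.support ⊆ ζ)
    (p : MvPolynomial σ R) :
    coeff a (rename Subtype.val (faceProj R V ζ σ p)) = coeff a (rename Subtype.val p) := by
  have := coeff_rename_restrictFace ha (rename Subtype.val p)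
  rwa [← faceProj_comp_restrictFace h, AlgHom.comp_apply, restrictFace_rename_val] at this

theorem sum_single_one_le_iff {ζ : Finset V} {a : V →₀ ℕ} :
    ∑ v ∈ ζ, Finsupp.single v 1 ≤ a ↔ ζ ⊆ a.support := by
  simp only [Finsupp.le_def, Finsupp.coe_finsetSum, Finset.sum_apply, Finsupp.single_apply,
    Finset.sum_ite_eq', Finset.subset_iff, Finsupp.mem_support_iff]
  refine ⟨fun h v hv => ?_, fun h v => ?_⟩
  · simpa [hv, Nat.one_le_iff_ne_zero] using h v
  · split_ifs with hv
    · exact Nat.one_le_iff_ne_zero.2 (h hv)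
    · exact Nat.zero_le _

theorem mem_stanleyReisnerIdeal_iff {K : Set (Finset V)} (hK : IsLowerSet K)
    {p : MvPolynomial V R} :
    p ∈ stanleyReisnerIdeal R V K ↔ ∀ a ∈ p.support, a.support ∉ K := by
  have hspan : stanleyReisnerIdeal R V K = Ideal.span ((fun s => monomial s (1 : R)) ''
      ((fun ζ : Finset V => ∑ v ∈ ζ, Finsupp.single v 1) '' Kᶜ)) := by
    rw [Set.image_image, stanleyReisnerIdeal]
    congr 1
    ext m
    simp [monomial_sum_one, X, eq_comm]
  rw [hspan, mem_ideal_span_monomial_image]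
  refine forall₂_congr fun a _ => ?_
  simp only [Set.exists_mem_image, sum_single_one_le_iff, Set.mem_compl_iff]
  exact ⟨fun ⟨ζ, hζ, hle⟩ ha => hζ (hK hle ha), fun h => ⟨a.support, h, subset_rfl⟩⟩

theorem mem_stanleyReisnerIdeal_iff_forall_restrictFace {K : Set (Finset V)}
    (hK : IsLowerSet K) {p : MvPolynomial V R} :
    p ∈ stanleyReisnerIdeal R V K ↔ ∀ σ ∈ K, restrictFace R σ p = 0 := by
  rw [mem_stanleyReisnerIdeal_iff hK]
  refine ⟨fun h σ hσ => ?_, fun h a ha haK => ?_⟩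
  · ext c
    rw [coeff_restrictFace, coeff_zero]
    by_contra hc
    exact h _ (mem_support_iff.2 hc) (hK (support_mapDomain_val_subset c) hσ)
  · have := coeff_rename_restrictFace (subset_refl a.support) p
    rw [h _ haK, map_zero, coeff_zero] at this
    exact mem_support_iff.1 ha this.symm

theorem exists_restrictFace_eq {K : Set (Finset V)} (hK : IsLowerSet K) (hKfin : K.Finite)
    (F : ∀ σ ∈ K, MvPolynomial σ R)
    (hF : ∀ σ τ (hσ : σ ∈ K) (hτ : τ ∈ K), σ ⊆ τ → faceProj R V σ τ (F τ hτ) = F σ hσ) :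
    ∃ p : MvPolynomial V R, ∀ σ (hσ : σ ∈ K), restrictFace R σ p = F σ hσ := by
  classical
  let g : (V →₀ ℕ) → R := fun a =>
    if h : a.support ∈ K then coeff a (rename Subtype.val (F a.support h)) else 0
  have hg : (Function.support g).Finite := by
    refine (hKfin.biUnion' fun σ hσ => (rename Subtype.val (F σ hσ)).support.finite_toSet).subset
      fun a ha => ?_
    obtain ⟨haK, ha⟩ := dite_ne_right_iff.1 ha
    exact Set.mem_iUnion₂.2 ⟨_, haK, mem_support_iff.2 ha⟩
  refine ⟨AddMonoidAlgebra.ofCoeff (Finsupp.ofSupportFinite g hg), fun σ hσ => ?_⟩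
  ext c
  have hsupp := support_mapDomain_val_subset c
  rw [coeff_restrictFace]
  change dite _ _ _ = _
  rw [dif_pos (hK hsupp hσ), ← hF _ σ _ hσ hsupp, coeff_rename_faceProj hsupp subset_rfl,
    coeff_rename_mapDomain _ Subtype.val_injective]

namespace stanleyReisnerRing

variable {K : Set (Finset V)}

noncomputable def restrict (hK : IsLowerSet K) (σ : Finset V) (hσ : σ ∈ K) :
    stanleyReisnerRing R V K →ₐ[R] MvPolynomial σ R :=
  Ideal.Quotient.liftₐ _ (restrictFace R σ) fun _ hp =>
    (mem_stanleyReisnerIdeal_iff_forall_restrictFace hK).1 hp σ hσ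

theorem restrict_comp_mkₐ (hK : IsLowerSet K) (σ : Finset V) (hσ : σ ∈ K) :
    (restrict hK σ hσ).comp (Ideal.Quotient.mkₐ R _) = restrictFace R σ :=
  Ideal.Quotient.liftₐ_comp _ _ _

theorem faceProj_comp_restrict (hK : IsLowerSet K) {σ τ : Finset V} (hσ : σ ∈ K) (hτ : τ ∈ K)
    (h : σ ⊆ τ) : (faceProj R V σ τ).comp (restrict hK τ hτ) = restrict hK σ hσ :=
  Ideal.Quotient.algHom_ext R <| by
    rw [AlgHom.comp_assoc, restrict_comp_mkₐ, restrict_comp_mkₐ, faceProj_comp_restrictFace h]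

theorem restrict_jointly_injective (hK : IsLowerSet K) (x y : stanleyReisnerRing R V K)
    (h : ∀ σ (hσ : σ ∈ K), restrict hK σ hσ x = restrict hK σ hσ y) : x = y := by
  obtain ⟨p, rfl⟩ := Ideal.Quotient.mk_surjective x
  obtain ⟨p', rfl⟩ := Ideal.Quotient.mk_surjective y
  refine Ideal.Quotient.eq.2 <| (mem_stanleyReisnerIdeal_iff_forall_restrictFace hK).2
    fun σ hσ => ?_
  rw [map_sub, sub_eq_zero]
  exact h σ hσ

end stanleyReisnerRing

end

theorem stanleyReisner_isLimit_of_facePolynomialDiagram_general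
    (R V : Type) [CommRing R] [Fintype V] [DecidableEq V]
    (K : Set (Finset V))
    (hdown : ∀ σ τ : Finset V, σ ∈ K → τ ⊆ σ → τ ∈ K) :
    ∃ q : ∀ σ : Finset V, σ ∈ K →
        (stanleyReisnerRing R V K →ₐ[R] MvPolynomial { v // v ∈ σ } R),
      -- the legs `q σ` are induced by `x_v ↦ x_v` (`v ∈ σ`), `x_v ↦ 0` (`v ∉ σ`):
      (∀ (σ : Finset V) (hσ : σ ∈ K),
        (q σ hσ).comp (Ideal.Quotient.mkₐ R (stanleyReisnerIdeal R V K)) =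
          aeval (fun v : V =>
            if h : v ∈ σ then (X ⟨v, h⟩ : MvPolynomial { v // v ∈ σ } R) else 0)) ∧
      -- `(R[K], q)` is a cone over the diagram:
      (∀ (σ τ : Finset V) (hσ : σ ∈ K) (hτ : τ ∈ K), σ ⊆ τ →
        (faceProj R V σ τ).comp (q τ hτ) = q σ hσ) ∧
      -- and it is a limit cone:
      (∀ (B : Type) [CommRing B] [Algebra R B]
        (f : ∀ σ : Finset V, σ ∈ K → (B →ₐ[R] MvPolynomial { v // v ∈ σ } R)),
        (∀ (σ τ : Finset V) (hσ : σ ∈ K) (hτ : τ ∈ K), σ ⊆ τ →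
          (faceProj R V σ τ).comp (f τ hτ) = f σ hσ) →
        ∃! g : B →ₐ[R] stanleyReisnerRing R V K,
          ∀ (σ : Finset V) (hσ : σ ∈ K), (q σ hσ).comp g = f σ hσ) := by
  have hK : IsLowerSet K := fun σ τ h hσ => hdown σ τ hσ h
  refine ⟨stanleyReisnerRing.restrict hK, stanleyReisnerRing.restrict_comp_mkₐ hK,
    fun σ τ hσ hτ h => stanleyReisnerRing.faceProj_comp_restrict hK hσ hτ h, fun B _ _ f hf => ?_⟩
  have hglue : ∀ b, ∃ x, ∀ σ : K, stanleyReisnerRing.restrict hK σ σ.2 x = f σ σ.2 b := by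
    intro b
    obtain ⟨p, hp⟩ := exists_restrictFace_eq hK K.toFinite (fun σ hσ => f σ hσ b)
      fun σ τ hσ hτ h => DFunLike.congr_fun (hf σ τ hσ hτ h) b
    exact ⟨Ideal.Quotient.mk _ p, fun σ => hp σ σ.2⟩
  simpa only [Subtype.forall] using existsUnique_algHom_comp_eq_of_jointly_injective
    (fun σ : K => stanleyReisnerRing.restrict hK σ σ.2)
    (fun x y h => stanleyReisnerRing.restrict_jointly_injective hK x y fun σ hσ => h ⟨σ, hσ⟩)
    (fun σ : K => f σ σ.2) hglue

/-- Let `K` be a finite simplicial complex on a finite vertex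
set `V` and `R` a commutative ring.  There is a family of `R`-algebra
homomorphisms `q σ : R[K] → S_R(σ)` (for faces `σ ∈ K`), induced by
`x_v ↦ x_v` for `v ∈ σ` and `x_v ↦ 0` for `v ∉ σ`, which is compatible with
the projections `p_{τσ}`; and the cone with vertex `R[K]` and legs `q σ` is a
limit cone for the diagram `σ ↦ S_R(σ)` over the opposite of the face poset of
`K`, in the category of commutative `R`-algebras: for every commutative
`R`-algebra `B` and every compatible family `f σ : B → S_R(σ)` there is a
unique `R`-algebra map `g : B → R[K]` with `q σ ∘ g = f σ` for all `σ ∈ K`.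
In particular `R[K]` is isomorphic to the limit of the diagram. -/
theorem stanleyReisner_isLimit_of_facePolynomialDiagram
    (R V : Type) [CommRing R] [Fintype V] [DecidableEq V]
    (K : Set (Finset V))
    (hempty : (∅ : Finset V) ∈ K)
    (hdown : ∀ σ τ : Finset V, σ ∈ K → τ ⊆ σ → τ ∈ K)
    (hsingle : ∀ v : V, ({v} : Finset V) ∈ K) :
    ∃ q : ∀ σ : Finset V, σ ∈ K →
        (stanleyReisnerRing R V K →ₐ[R] MvPolynomial { v // v ∈ σ } R),
      -- the legs `q σ` are induced by `x_v ↦ x_v` (`v ∈ σ`), `x_v ↦ 0` (`v ∉ σ`):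
      (∀ (σ : Finset V) (hσ : σ ∈ K),
        (q σ hσ).comp (Ideal.Quotient.mkₐ R (stanleyReisnerIdeal R V K)) =
          aeval (fun v : V =>
            if h : v ∈ σ then (X ⟨v, h⟩ : MvPolynomial { v // v ∈ σ } R) else 0)) ∧
      -- `(R[K], q)` is a cone over the diagram:
      (∀ (σ τ : Finset V) (hσ : σ ∈ K) (hτ : τ ∈ K), σ ⊆ τ →
        (faceProj R V σ τ).comp (q τ hτ) = q σ hσ) ∧
      -- and it is a limit cone:
      (∀ (B : Type) [CommRing B] [Algebra R B]
        (f : ∀ σ : Finset V, σ ∈ K → (B →ₐ[R] MvPolynomial { v // v ∈ σ } R)),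
        (∀ (σ τ : Finset V) (hσ : σ ∈ K) (hτ : τ ∈ K), σ ⊆ τ →
          (faceProj R V σ τ).comp (f τ hτ) = f σ hσ) →
        ∃! g : B →ₐ[R] stanleyReisnerRing R V K,
          ∀ (σ : Finset V) (hσ : σ ∈ K), (q σ hσ).comp g = f σ hσ) :=
  stanleyReisner_isLimit_of_facePolynomialDiagram_general R V K hdown
end

section
/- Let K be a finite simplicial complex on a finite vertex set V and let R be a commutative ring. For each face σ of K let Λ(σ) denote the exterior algebra over R of the free R-module with basis σ, and for faces σ ⊆ τ let Λ(σ) → Λ(τ) be the R-algebra homomorphism induced by the inclusion of basis elements. Then the colimit, in the category of (not necessarily commutative) associative unital R-algebras, of the functor from the face poset of K sending σ to Λ(σ) is isomorphic to the quotient of the free associative R-algebra on generators u_v (v ∈ V) by the two-sided ideal generated by the elements u_v² for all v ∈ V and u_v u_w + u_w u_v for all two-element faces {v,w} ∈ K, where the structure map from each Λ(σ) into this quotient is the algebra map sending each exterior generator corresponding to v ∈ σ to the class of u_v. -/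
open FreeAlgebra

/-- The quadratic relations defining the quadratic dual of the Stanley–Reisner
ring: `u_v² = 0` for all vertices `v`, and `u_v u_w + u_w u_v = 0` for all
two-element faces `{v,w} ∈ K`. -/
inductive extQuadRel (R V : Type) [CommRing R] [DecidableEq V]
    (K : Set (Finset V)) : FreeAlgebra R V → FreeAlgebra R V → Prop
  | sq (v : V) : extQuadRel R V K (ι R v * ι R v) 0
  | anticomm (v w : V) (hvw : v ≠ w) (h : ({v, w} : Finset V) ∈ K) :
      extQuadRel R V K (ι R v * ι R w + ι R w * ι R v) 0

/-- The quotient of the free associative `R`-algebra on generators `u_v`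
(`v ∈ V`) by the two-sided ideal generated by the elements `u_v²` (`v ∈ V`)
and `u_v u_w + u_w u_v` (`{v,w} ∈ K` a two-element face). -/
abbrev extQuadDual (R V : Type) [CommRing R] [DecidableEq V]
    (K : Set (Finset V)) : Type :=
  RingQuot (extQuadRel R V K)

/-! A cocone over `σ ↦ Λ(σ)` is determined by the images `b v` of the vertex generators, read
off on the singleton faces. These satisfy `b v ^ 2 = 0`, and `b v b w + b w b v = 0` whenever
`{v, w}` is a face, since both identities already hold in `Λ({v, w})`; these are exactly the
defining relations of `A(K)`, so the cocone factors uniquely through `A(K)`. Conversely, the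
classes `u_v` for `v ∈ σ` square to zero and anticommute pairwise, so they define
`Λ(σ) → A(K)`. -/

theorem Finset.sum_smul_mul_self_eq_zero {R A ι : Type*} [CommSemiring R] [Semiring A]
    [Algebra R A] (a : ι → A) (c : ι → R) (hsq : ∀ i, a i * a i = 0)
    (hanti : Pairwise fun i j => a i * a j + a j * a i = 0) (s : Finset ι) :
    (∑ i ∈ s, c i • a i) * (∑ i ∈ s, c i • a i) = 0 := by
  classical
  induction s using Finset.induction_on with
  | empty => simp
  | insert i s hi ih =>
    set x := ∑ j ∈ s, c j • a j
    have hcross : x * a i + a i * x = 0 := by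
      rw [Finset.sum_mul, Finset.mul_sum, ← Finset.sum_add_distrib]
      refine Finset.sum_eq_zero fun j hj => ?_
      rw [smul_mul_assoc, mul_smul_comm, ← smul_add, hanti (ne_of_mem_of_not_mem hj hi),
        smul_zero]
    rw [Finset.sum_insert hi]
    calc (c i • a i + x) * (c i • a i + x)
        = (c i * c i) • (a i * a i) + c i • (x * a i + a i * x) + x * x := by
          simp only [add_mul, mul_add, smul_add, smul_mul_assoc, mul_smul_comm, smul_smul]
          abel
      _ = 0 := by rw [hsq, hcross, ih, smul_zero, smul_zero, add_zero, add_zero]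

namespace ExteriorAlgebra

variable {R M A ι : Type*} [CommRing R] [AddCommGroup M] [Module R M] [Ring A] [Algebra R A]

noncomputable def liftOfBasis (b : Module.Basis ι R M) (a : ι → A)
    (hsq : ∀ i, a i * a i = 0) (hanti : Pairwise fun i j => a i * a j + a j * a i = 0) :
    ExteriorAlgebra R M →ₐ[R] A :=
  lift R ⟨b.constr R a, fun x => by
    rw [b.constr_apply, Finsupp.sum]
    exact Finset.sum_smul_mul_self_eq_zero a _ hsq hanti _⟩

theorem liftOfBasis_ι (b : Module.Basis ι R M) (a : ι → A)
    (hsq : ∀ i, a i * a i = 0) (hanti : Pairwise fun i j => a i * a j + a j * a i = 0) (i : ι) :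
    liftOfBasis b a hsq hanti (ExteriorAlgebra.ι R (b i)) = a i := by
  rw [liftOfBasis, lift_ι_apply, b.constr_basis]

theorem hom_ext_basis (b : Module.Basis ι R M) {f g : ExteriorAlgebra R M →ₐ[R] A}
    (h : ∀ i, f (ExteriorAlgebra.ι R (b i)) = g (ExteriorAlgebra.ι R (b i))) : f = g :=
  hom_ext (b.ext h)

end ExteriorAlgebra

section FaceInclusion

variable (R : Type) [CommRing R] {V : Type} [DecidableEq V]

noncomputable def faceInclusion {σ τ : Finset V} (h : σ ⊆ τ) :
    ExteriorAlgebra R (σ → R) →ₐ[R] ExteriorAlgebra R (τ → R) :=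
  ExteriorAlgebra.map ((Pi.basisFun R σ).constr R fun v => Pi.single ⟨(v : V), h v.2⟩ 1)

theorem faceInclusion_ι_single {σ τ : Finset V} (h : σ ⊆ τ) (v : σ) :
    faceInclusion R h (ExteriorAlgebra.ι R (Pi.single v 1)) =
      ExteriorAlgebra.ι R (Pi.single ⟨(v : V), h v.2⟩ 1) := by
  rw [faceInclusion, ExteriorAlgebra.map_apply_ι, ← Pi.basisFun_apply, Module.Basis.constr_basis]

variable {R} {B : Type} [Ring B] [Algebra R B] {K : Set (Finset V)}

theorem apply_ι_single_eq_of_comp_faceInclusion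
    (f : ∀ σ : Finset V, σ ∈ K → (ExteriorAlgebra R (σ → R) →ₐ[R] B))
    (hf : ∀ (σ τ : Finset V) (hσ : σ ∈ K) (hτ : τ ∈ K) (h : σ ⊆ τ),
      (f τ hτ).comp (faceInclusion R h) = f σ hσ)
    (hsingle : ∀ v : V, ({v} : Finset V) ∈ K) {σ : Finset V} (hσ : σ ∈ K) (v : σ) :
    f σ hσ (ExteriorAlgebra.ι R (Pi.single v 1)) =
      f {(v : V)} (hsingle v)
        (ExteriorAlgebra.ι R (Pi.single ⟨(v : V), Finset.mem_singleton_self _⟩ 1)) := by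
  rw [← hf _ _ _ hσ (Finset.singleton_subset_iff.2 v.2), AlgHom.comp_apply,
    faceInclusion_ι_single]

end FaceInclusion

namespace extQuadDual

variable {R V : Type} [CommRing R] [DecidableEq V] {K : Set (Finset V)}

variable (R K) in
noncomputable def gen (v : V) : extQuadDual R V K :=
  RingQuot.mkAlgHom R (extQuadRel R V K) (ι R v)

theorem gen_mul_self (v : V) : gen R K v * gen R K v = 0 := by
  simpa only [gen, map_mul, map_zero] using RingQuot.mkAlgHom_rel R (extQuadRel.sq (K := K) v)

theorem gen_anticomm {v w : V} (hvw : v ≠ w) (h : ({v, w} : Finset V) ∈ K) :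
    gen R K v * gen R K w + gen R K w * gen R K v = 0 := by
  simpa only [gen, map_add, map_mul, map_zero] using
    RingQuot.mkAlgHom_rel R (extQuadRel.anticomm (R := R) v w hvw h)

variable {B : Type} [Ring B] [Algebra R B]

variable (K) in
noncomputable def lift (b : V → B) (hsq : ∀ v, b v * b v = 0)
    (hanti : ∀ v w, v ≠ w → ({v, w} : Finset V) ∈ K → b v * b w + b w * b v = 0) :
    extQuadDual R V K →ₐ[R] B :=
  RingQuot.liftAlgHom R ⟨FreeAlgebra.lift R b, by
    rintro _ _ (v | ⟨v, w, hvw, h⟩)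
    · simp only [map_mul, map_zero, FreeAlgebra.lift_ι_apply, hsq]
    · simp only [map_mul, map_add, map_zero, FreeAlgebra.lift_ι_apply, hanti v w hvw h]⟩

theorem lift_gen (b : V → B) (hsq : ∀ v, b v * b v = 0)
    (hanti : ∀ v w, v ≠ w → ({v, w} : Finset V) ∈ K → b v * b w + b w * b v = 0) (v : V) :
    lift K b hsq hanti (gen R K v) = b v := by
  rw [lift, gen, RingQuot.liftAlgHom_mkAlgHom_apply, FreeAlgebra.lift_ι_apply]

theorem hom_ext {f g : extQuadDual R V K →ₐ[R] B} (h : ∀ v, f (gen R K v) = g (gen R K v)) :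
    f = g :=
  RingQuot.ringQuot_ext' R f g (FreeAlgebra.hom_ext (funext h))

noncomputable def ofFace {σ : Finset V}
    (hσ : ∀ v ∈ σ, ∀ w ∈ σ, v ≠ w → ({v, w} : Finset V) ∈ K) :
    ExteriorAlgebra R (σ → R) →ₐ[R] extQuadDual R V K :=
  ExteriorAlgebra.liftOfBasis (Pi.basisFun R σ) (fun v => gen R K (v : V))
    (fun v => gen_mul_self (v : V)) fun v w hvw =>
      gen_anticomm (Subtype.coe_ne_coe.2 hvw) (hσ v v.2 w w.2 (Subtype.coe_ne_coe.2 hvw))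

theorem ofFace_ι_single {σ : Finset V}
    (hσ : ∀ v ∈ σ, ∀ w ∈ σ, v ≠ w → ({v, w} : Finset V) ∈ K) (v : σ) :
    ofFace hσ (ExteriorAlgebra.ι R (Pi.single v 1)) = gen R K (v : V) := by
  rw [← Pi.basisFun_apply]
  exact ExteriorAlgebra.liftOfBasis_ι _ _ _ _ v

theorem ofFace_comp_faceInclusion
    (hK : ∀ σ ∈ K, ∀ v ∈ σ, ∀ w ∈ σ, v ≠ w → ({v, w} : Finset V) ∈ K)
    {σ τ : Finset V} (hσ : σ ∈ K) (hτ : τ ∈ K) (h : σ ⊆ τ) :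
    (ofFace (hK τ hτ)).comp (faceInclusion R h) = ofFace (hK σ hσ) :=
  ExteriorAlgebra.hom_ext_basis (Pi.basisFun R σ) fun v => by
    simp only [Pi.basisFun_apply, AlgHom.comp_apply, faceInclusion_ι_single, ofFace_ι_single]

theorem existsUnique_comp_ofFace_eq
    (hK : ∀ σ ∈ K, ∀ v ∈ σ, ∀ w ∈ σ, v ≠ w → ({v, w} : Finset V) ∈ K)
    (hsingle : ∀ v : V, ({v} : Finset V) ∈ K)
    (f : ∀ σ : Finset V, σ ∈ K → (ExteriorAlgebra R (σ → R) →ₐ[R] B))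
    (hf : ∀ (σ τ : Finset V) (hσ : σ ∈ K) (hτ : τ ∈ K) (h : σ ⊆ τ),
      (f τ hτ).comp (faceInclusion R h) = f σ hσ) :
    ∃! g : extQuadDual R V K →ₐ[R] B, ∀ (σ : Finset V) (hσ : σ ∈ K),
      g.comp (ofFace (hK σ hσ)) = f σ hσ := by
  set b : V → B := fun v => f {v} (hsingle v)
    (ExteriorAlgebra.ι R (Pi.single ⟨v, Finset.mem_singleton_self v⟩ 1))
  have hfb (σ : Finset V) (hσ : σ ∈ K) (v : σ) :
      f σ hσ (ExteriorAlgebra.ι R (Pi.single v 1)) = b v :=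
    apply_ι_single_eq_of_comp_faceInclusion f hf hsingle hσ v
  have hsq (v : V) : b v * b v = 0 := by
    rw [← map_mul, ExteriorAlgebra.ι_sq_zero, map_zero]
  have hanti (v w : V) (_ : v ≠ w) (h : ({v, w} : Finset V) ∈ K) :
      b v * b w + b w * b v = 0 := by
    rw [← hfb _ h ⟨v, Finset.mem_insert_self v _⟩,
      ← hfb _ h ⟨w, Finset.mem_insert_of_mem (Finset.mem_singleton_self w)⟩,
      ← map_mul (f _ h), ← map_mul (f _ h), ← map_add, ExteriorAlgebra.ι_add_mul_swap, map_zero]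
  refine ⟨lift K b hsq hanti,
    fun σ hσ => ExteriorAlgebra.hom_ext_basis (Pi.basisFun R σ) fun v => ?_,
    fun g hg => hom_ext fun v => ?_⟩
  · simp only [Pi.basisFun_apply, AlgHom.comp_apply, ofFace_ι_single, lift_gen, hfb]
  · rw [lift_gen, ← ofFace_ι_single (hK {v} (hsingle v)) ⟨v, Finset.mem_singleton_self v⟩,
      ← AlgHom.comp_apply, hg]

end extQuadDual

theorem exteriorDiagram_colimit_isQuadraticDual_general
    (R V : Type) [CommRing R] [DecidableEq V]
    (K : Set (Finset V))
    (hdown : ∀ σ τ : Finset V, σ ∈ K → τ ⊆ σ → τ ∈ K)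
    (hsingle : ∀ v : V, ({v} : Finset V) ∈ K) :
    ∃ (inc : ∀ σ τ : Finset V, σ ∈ K → τ ∈ K → σ ⊆ τ →
        (ExteriorAlgebra R ({ v // v ∈ σ } → R) →ₐ[R]
          ExteriorAlgebra R ({ v // v ∈ τ } → R)))
      (j : ∀ σ : Finset V, σ ∈ K →
        (ExteriorAlgebra R ({ v // v ∈ σ } → R) →ₐ[R] extQuadDual R V K)),
      -- `inc` is induced by the inclusion of basis elements:
      (∀ (σ τ : Finset V) (hσ : σ ∈ K) (hτ : τ ∈ K) (hστ : σ ⊆ τ)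
        (v : { v // v ∈ σ }),
        inc σ τ hσ hτ hστ (ExteriorAlgebra.ι R (Pi.single v (1 : R))) =
          ExteriorAlgebra.ι R (Pi.single (⟨(v : V), hστ v.2⟩ : { v // v ∈ τ }) (1 : R))) ∧
      -- `j σ` sends the exterior generator of `v ∈ σ` to the class of `u_v`:
      (∀ (σ : Finset V) (hσ : σ ∈ K) (v : { v // v ∈ σ }),
        j σ hσ (ExteriorAlgebra.ι R (Pi.single v (1 : R))) =
          RingQuot.mkAlgHom R (extQuadRel R V K) (ι R (v : V))) ∧
      -- the maps `j σ` form a cocone: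
      (∀ (σ τ : Finset V) (hσ : σ ∈ K) (hτ : τ ∈ K) (hστ : σ ⊆ τ),
        (j τ hτ).comp (inc σ τ hσ hτ hστ) = j σ hσ) ∧
      -- which is a colimit cocone in the category of associative unital
      -- `R`-algebras:
      (∀ (B : Type) [Ring B] [Algebra R B]
        (f : ∀ σ : Finset V, σ ∈ K →
          (ExteriorAlgebra R ({ v // v ∈ σ } → R) →ₐ[R] B)),
        (∀ (σ τ : Finset V) (hσ : σ ∈ K) (hτ : τ ∈ K) (hστ : σ ⊆ τ),
          (f τ hτ).comp (inc σ τ hσ hτ hστ) = f σ hσ) →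
        ∃! g : extQuadDual R V K →ₐ[R] B,
          ∀ (σ : Finset V) (hσ : σ ∈ K), g.comp (j σ hσ) = f σ hσ) := by
  have hK : ∀ σ ∈ K, ∀ v ∈ σ, ∀ w ∈ σ, v ≠ w → ({v, w} : Finset V) ∈ K :=
    fun σ hσ v hv w hw _ =>
      hdown σ _ hσ (Finset.insert_subset hv (Finset.singleton_subset_iff.2 hw))
  exact ⟨fun σ τ _ _ h => faceInclusion R h, fun σ hσ => extQuadDual.ofFace (hK σ hσ),
    fun σ τ _ _ h v => faceInclusion_ι_single R h v,
    fun σ hσ v => extQuadDual.ofFace_ι_single _ v,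
    fun σ τ hσ hτ h => extQuadDual.ofFace_comp_faceInclusion hK hσ hτ h,
    fun B _ _ f hf => extQuadDual.existsUnique_comp_ofFace_eq hK hsingle f hf⟩

/-- Let `K` be a finite simplicial complex on a finite vertex
set `V` and `R` a commutative ring.  For a face `σ` let `Λ(σ)` be the exterior
algebra on the free `R`-module with basis `σ`.  There are `R`-algebra maps
`inc : Λ(σ) → Λ(τ)` (for faces `σ ⊆ τ`) induced by the inclusion of basis
elements, and `j σ : Λ(σ) → A(K)` into the quotient `A(K)` of the free
associative algebra by the relations `u_v² = 0` (`v ∈ V`) and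
`u_v u_w + u_w u_v = 0` (`{v,w} ∈ K`), sending each exterior generator of
`v ∈ σ` to the class of `u_v`; the maps `j σ` form a cocone over the diagram
`σ ↦ Λ(σ)` on the face poset of `K`, and this cocone is a colimit cocone in
the category of associative unital `R`-algebras.  In particular the colimit of
the diagram is isomorphic to `A(K)`. -/
theorem exteriorDiagram_colimit_isQuadraticDual
    (R V : Type) [CommRing R] [Fintype V] [DecidableEq V]
    (K : Set (Finset V))
    (hempty : (∅ : Finset V) ∈ K)
    (hdown : ∀ σ τ : Finset V, σ ∈ K → τ ⊆ σ → τ ∈ K)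
    (hsingle : ∀ v : V, ({v} : Finset V) ∈ K) :
    ∃ (inc : ∀ σ τ : Finset V, σ ∈ K → τ ∈ K → σ ⊆ τ →
        (ExteriorAlgebra R ({ v // v ∈ σ } → R) →ₐ[R]
          ExteriorAlgebra R ({ v // v ∈ τ } → R)))
      (j : ∀ σ : Finset V, σ ∈ K →
        (ExteriorAlgebra R ({ v // v ∈ σ } → R) →ₐ[R] extQuadDual R V K)),
      -- `inc` is induced by the inclusion of basis elements:
      (∀ (σ τ : Finset V) (hσ : σ ∈ K) (hτ : τ ∈ K) (hστ : σ ⊆ τ)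
        (v : { v // v ∈ σ }),
        inc σ τ hσ hτ hστ (ExteriorAlgebra.ι R (Pi.single v (1 : R))) =
          ExteriorAlgebra.ι R (Pi.single (⟨(v : V), hστ v.2⟩ : { v // v ∈ τ }) (1 : R))) ∧
      -- `j σ` sends the exterior generator of `v ∈ σ` to the class of `u_v`:
      (∀ (σ : Finset V) (hσ : σ ∈ K) (v : { v // v ∈ σ }),
        j σ hσ (ExteriorAlgebra.ι R (Pi.single v (1 : R))) =
          RingQuot.mkAlgHom R (extQuadRel R V K) (ι R (v : V))) ∧
      -- the maps `j σ` form a cocone: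
      (∀ (σ τ : Finset V) (hσ : σ ∈ K) (hτ : τ ∈ K) (hστ : σ ⊆ τ),
        (j τ hτ).comp (inc σ τ hσ hτ hστ) = j σ hσ) ∧
      -- which is a colimit cocone in the category of associative unital
      -- `R`-algebras:
      (∀ (B : Type) [Ring B] [Algebra R B]
        (f : ∀ σ : Finset V, σ ∈ K →
          (ExteriorAlgebra R ({ v // v ∈ σ } → R) →ₐ[R] B)),
        (∀ (σ τ : Finset V) (hσ : σ ∈ K) (hτ : τ ∈ K) (hστ : σ ⊆ τ),
          (f τ hτ).comp (inc σ τ hσ hτ hστ) = f σ hσ) →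
        ∃! g : extQuadDual R V K →ₐ[R] B,
          ∀ (σ : Finset V) (hσ : σ ∈ K), g.comp (j σ hσ) = f σ hσ) :=
  exteriorDiagram_colimit_isQuadraticDual_general R V K hdown hsingle
end

section
/- Let m ≥ 2. Let U_m = {z ∈ ℂ^m : for all i ≠ j, not both z_i = 0 and z_j = 0} be the complement in ℂ^m of the union of all codimension-two coordinate subspaces {z : z_i = z_j = 0}, and let Z_m = ⋃_{i=1}^m {z ∈ ℂ^m : |z_i| ≤ 1 and |z_j| = 1 for all j ≠ i}, both with the subspace topology from ℂ^m. Then U_m and Z_m are homotopy equivalent. (Z_m is the moment-angle complex Z_K of the discrete simplicial complex K on m vertices.) -/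
/-- The complement in `ℂ^m` of the union of all codimension-two coordinate
subspaces `{z : z_i = z_j = 0}` for `i ≠ j`. -/
def subspaceArrangementComplement (m : ℕ) : Set (Fin m → ℂ) :=
  { z | ∀ i j : Fin m, i ≠ j → ¬(z i = 0 ∧ z j = 0) }

/-- The moment-angle complex of the discrete simplicial complex on `m`
vertices: `Z_m = ⋃_{i} {z ∈ ℂ^m : |z_i| ≤ 1 and |z_j| = 1 for all j ≠ i}`. -/
def discreteMomentAngleComplex (m : ℕ) : Set (Fin m → ℂ) :=
  { z | ∃ i : Fin m, ‖z i‖ ≤ 1 ∧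
      ∀ j : Fin m, j ≠ i → ‖z j‖ = 1 }

/-!
`Z_m` is a deformation retract of `U_m`. For `z ∈ U_m` let `s(z)` be the second smallest modulus
of its coordinates; it is positive since at most one coordinate of `z` vanishes. Dividing each `z_j`
by `max |z_j| s(z)` puts every coordinate of modulus at least `s(z)` on the unit circle and the
(at most one) smaller coordinate in the unit disc, and it fixes `Z_m`, where `s = 1`. The straight
line from `z` to its image only rescales coordinates by positive reals, so it stays in `U_m`.
-/

theorem ContinuousMap.homotopic_of_segment_subset {X E : Type*} [TopologicalSpace X]
    [AddCommGroup E] [TopologicalSpace E] [IsTopologicalAddGroup E] [Module ℝ E]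
    [ContinuousSMul ℝ E] {s : Set E} {f g : C(X, s)}
    (h : ∀ x, segment ℝ (f x : E) (g x) ⊆ s) : f.Homotopic g := by
  let H := Homotopy.affine ((⟨(↑), continuous_subtype_val⟩ : C(s, E)).comp f)
    ((⟨(↑), continuous_subtype_val⟩ : C(s, E)).comp g)
  have hH : ∀ p, H p ∈ s := fun p => h p.2 (lineMap_mem_segment ℝ _ _ p.1.2)
  exact ⟨{ toFun := fun p => ⟨H p, hH p⟩
           continuous_toFun := H.continuous.subtype_mk hH
           map_zero_left := fun x => Subtype.ext (H.apply_zero x)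
           map_one_left := fun x => Subtype.ext (H.apply_one x) }⟩

section

variable {ι : Type*} [Fintype ι] [Nontrivial ι]

open Classical in
noncomputable def secondSmallestNorm (z : ι → ℂ) : ℝ :=
  have : (Finset.univ : Finset ι).offDiag.Nonempty := by
    obtain ⟨i, j, hij⟩ := exists_pair_ne ι
    exact ⟨(i, j), by simpa using hij⟩
  Finset.univ.offDiag.inf' this fun p => max ‖z p.1‖ ‖z p.2‖

theorem le_secondSmallestNorm_iff {z : ι → ℂ} {c : ℝ} :
    c ≤ secondSmallestNorm z ↔ ∀ i j, i ≠ j → c ≤ max ‖z i‖ ‖z j‖ := by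
  simp [secondSmallestNorm, Finset.le_inf'_iff]

theorem lt_secondSmallestNorm_iff {z : ι → ℂ} {c : ℝ} :
    c < secondSmallestNorm z ↔ ∀ i j, i ≠ j → c < max ‖z i‖ ‖z j‖ := by
  simp [secondSmallestNorm, Finset.lt_inf'_iff]

theorem secondSmallestNorm_le (z : ι → ℂ) {i j : ι} (hij : i ≠ j) :
    secondSmallestNorm z ≤ max ‖z i‖ ‖z j‖ :=
  le_secondSmallestNorm_iff.1 le_rfl i j hij

theorem continuous_secondSmallestNorm : Continuous (secondSmallestNorm : (ι → ℂ) → ℝ) := by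
  unfold secondSmallestNorm
  exact Continuous.finset_inf'_apply _ fun p _ => by fun_prop

theorem eq_of_norm_lt_secondSmallestNorm {z : ι → ℂ} {i j : ι}
    (hi : ‖z i‖ < secondSmallestNorm z) (hj : ‖z j‖ < secondSmallestNorm z) : i = j := by
  by_contra hij
  exact (secondSmallestNorm_le z hij).not_gt (max_lt hi hj)

noncomputable def momentAngleRetraction (z : ι → ℂ) : ι → ℂ :=
  (fun j => (max ‖z j‖ (secondSmallestNorm z))⁻¹) • z

theorem norm_momentAngleRetraction_apply (z : ι → ℂ) (j : ι) :
    ‖momentAngleRetraction z j‖ = ‖z j‖ / max ‖z j‖ (secondSmallestNorm z) := by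
  rw [momentAngleRetraction, Pi.smul_apply', norm_smul, norm_inv, Real.norm_eq_abs,
    abs_of_nonneg ((norm_nonneg _).trans (le_max_left _ _)), inv_mul_eq_div]

end

section

variable {m : ℕ}

theorem mem_subspaceArrangementComplement_of_eq_zero_imp {z w : Fin m → ℂ}
    (hz : z ∈ subspaceArrangementComplement m) (hw : ∀ j, w j = 0 → z j = 0) :
    w ∈ subspaceArrangementComplement m :=
  fun i j hij h => hz i j hij ⟨hw i h.1, hw j h.2⟩

theorem segment_smul_subset_subspaceArrangementComplement {z : Fin m → ℂ}
    (hz : z ∈ subspaceArrangementComplement m) {c : Fin m → ℝ} (hc : ∀ j, 0 < c j) :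
    segment ℝ z (c • z) ⊆ subspaceArrangementComplement m := by
  rintro _ ⟨a, b, ha, hb, hab, rfl⟩
  refine mem_subspaceArrangementComplement_of_eq_zero_imp hz fun j hj => ?_
  have hpos : 0 < a + b * c j := by
    rcases hb.eq_or_lt with rfl | hb
    · linarith
    · nlinarith [mul_pos hb (hc j)]
  have hj' : (a + b * c j) • z j = 0 := by
    rw [← hj]; simp only [Pi.add_apply, Pi.smul_apply, Pi.smul_apply', add_smul, mul_smul]
  exact (smul_eq_zero.1 hj').resolve_left hpos.ne'

theorem norm_le_one_of_mem_discreteMomentAngleComplex {z : Fin m → ℂ}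
    (hz : z ∈ discreteMomentAngleComplex m) (j : Fin m) : ‖z j‖ ≤ 1 := by
  obtain ⟨i, hi, hone⟩ := hz
  rcases eq_or_ne j i with rfl | hji
  · exact hi
  · exact (hone j hji).le

theorem discreteMomentAngleComplex_subset_subspaceArrangementComplement :
    discreteMomentAngleComplex m ⊆ subspaceArrangementComplement m := by
  rintro z ⟨k, -, hk⟩ i j hij ⟨hi, hj⟩
  rcases eq_or_ne i k with rfl | hik
  · simpa [hj] using hk j hij.symm
  · simpa [hi] using hk i hik

variable [Nontrivial (Fin m)]

theorem secondSmallestNorm_pos {z : Fin m → ℂ} (hz : z ∈ subspaceArrangementComplement m) :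
    0 < secondSmallestNorm z :=
  lt_secondSmallestNorm_iff.2 fun i j hij => by
    rw [lt_max_iff, norm_pos_iff, norm_pos_iff]
    exact not_and_or.1 (hz i j hij)

theorem secondSmallestNorm_eq_one {z : Fin m → ℂ} (hz : z ∈ discreteMomentAngleComplex m) :
    secondSmallestNorm z = 1 := by
  obtain ⟨i, hi, hone⟩ := hz
  obtain ⟨j, hji⟩ := exists_ne i
  refine le_antisymm ?_ (le_secondSmallestNorm_iff.2 fun k l hkl => ?_)
  · exact (secondSmallestNorm_le z hji.symm).trans (by simp [hone j hji, hi])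
  · rcases eq_or_ne k i with rfl | hki
    · exact (hone l hkl.symm).ge.trans (le_max_right _ _)
    · exact (hone k hki).ge.trans (le_max_left _ _)

theorem momentAngleRetraction_mem {z : Fin m → ℂ} (hz : z ∈ subspaceArrangementComplement m) :
    momentAngleRetraction z ∈ discreteMomentAngleComplex m := by
  have hs := secondSmallestNorm_pos hz
  have hone : ∀ j, secondSmallestNorm z ≤ ‖z j‖ → ‖momentAngleRetraction z j‖ = 1 :=
    fun j hj => by
      rw [norm_momentAngleRetraction_apply, max_eq_left hj, div_self (hs.trans_le hj).ne']
  by_cases hsmall : ∃ i, ‖z i‖ < secondSmallestNorm z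
  · obtain ⟨i, hi⟩ := hsmall
    refine ⟨i, ?_, fun j hji => hone j <| not_lt.1 fun hj =>
      hji (eq_of_norm_lt_secondSmallestNorm hj hi)⟩
    rw [norm_momentAngleRetraction_apply, max_eq_right hi.le]
    exact div_le_one_of_le₀ hi.le hs.le
  · simp only [not_exists, not_lt] at hsmall
    obtain ⟨i⟩ : Nonempty (Fin m) := inferInstance
    exact ⟨i, (hone i (hsmall i)).le, fun j _ => hone j (hsmall j)⟩

theorem momentAngleRetraction_eq_self {z : Fin m → ℂ}
    (hz : z ∈ discreteMomentAngleComplex m) : momentAngleRetraction z = z := by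
  funext j
  simp [momentAngleRetraction, secondSmallestNorm_eq_one hz,
    norm_le_one_of_mem_discreteMomentAngleComplex hz j]

theorem continuousOn_momentAngleRetraction :
    ContinuousOn momentAngleRetraction (subspaceArrangementComplement m) := by
  refine continuousOn_pi.2 fun j => ?_
  have hscale : Continuous fun z : Fin m → ℂ => max ‖z j‖ (secondSmallestNorm z) :=
    (continuous_apply j).norm.max continuous_secondSmallestNorm
  have hscale_ne : ∀ z ∈ subspaceArrangementComplement m,
      max ‖z j‖ (secondSmallestNorm z) ≠ 0 :=
    fun z hz => (lt_max_of_lt_right (secondSmallestNorm_pos hz)).ne'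
  exact (hscale.continuousOn.inv₀ hscale_ne).smul (continuous_apply j).continuousOn

theorem segment_momentAngleRetraction_subset {z : Fin m → ℂ}
    (hz : z ∈ subspaceArrangementComplement m) :
    segment ℝ z (momentAngleRetraction z) ⊆ subspaceArrangementComplement m :=
  segment_smul_subset_subspaceArrangementComplement hz fun _ =>
    inv_pos.2 (lt_max_of_lt_right (secondSmallestNorm_pos hz))

end

/-- For `m ≥ 2`, the complement `U_m` in `ℂ^m` of the union
of all codimension-two coordinate subspaces is homotopy equivalent to the
moment-angle complex `Z_m` of the discrete simplicial complex on `m` vertices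
(both with the subspace topology from `ℂ^m`). -/
theorem complement_homotopyEquiv_momentAngle (m : ℕ) (hm : 2 ≤ m) :
    Nonempty
      (ContinuousMap.HomotopyEquiv
        (subspaceArrangementComplement m) (discreteMomentAngleComplex m)) := by
  have : Nontrivial (Fin m) := Fin.nontrivial_iff_two_le.2 hm
  let r : C(subspaceArrangementComplement m, discreteMomentAngleComplex m) :=
    ⟨_, continuousOn_momentAngleRetraction.mapsToRestrict fun _ => momentAngleRetraction_mem⟩
  let incl := ContinuousMap.inclusion
    (discreteMomentAngleComplex_subset_subspaceArrangementComplement (m := m))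
  have hr : r.comp incl = .id _ := by
    ext z : 1
    exact Subtype.ext (momentAngleRetraction_eq_self z.2)
  refine ⟨{ toFun := r, invFun := incl, left_inv := ?_, right_inv := hr ▸ .refl _ }⟩
  exact (ContinuousMap.homotopic_of_segment_subset (f := .id _) (g := incl.comp r) fun z =>
    segment_momentAngleRetraction_subset z.2).symm
end
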